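/- For every external current $I \in \mathbb{R}$, the Morris--Lecar system admits at least one equilibrium point: there exist $V^* \in \mathbb{R}$ and $N^* = N_\infty(V^*)$ such that $g_{Ca} M_\infty(V^*)(V^* - V_{Ca}) + g_K N^*(V^* - V_K) + g_L(V^* - V_L) = I$. -/
import Mathlib


private lemma tanh_cont : Continuous Real.tanh := by
  have h : ∀ x, Real.cosh x ≠ 0 := fun x => (Real.cosh_pos x).ne'
  have : Real.tanh = fun x => Real.sinh x / Real.cosh x := by
    funext x; exact Real.tanh_eq_sinh_div_cosh x
  rw [this]
  exact Real.continuous_sinh.div Real.continuous_cosh h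

private lemma tanh_bounds (x : ℝ) : -1 < Real.tanh x ∧ Real.tanh x < 1 := by
  have hc := Real.cosh_pos x
  have h1 : Real.cosh x + Real.sinh x = Real.exp x := Real.cosh_add_sinh x
  have h2 : Real.cosh x - Real.sinh x = Real.exp (-x) := Real.cosh_sub_sinh x
  have e1 := Real.exp_pos x
  have e2 := Real.exp_pos (-x)
  rw [Real.tanh_eq_sinh_div_cosh]
  constructor
  · rw [lt_div_iff₀ hc]; nlinarith
  · rw [div_lt_iff₀ hc]; nlinarith

theorem morris_lecar_equilibrium_exists
    (gCa gK gL VCa VK VL V1 V2 V3 V4 : ℝ)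
    (hgCa : 0 ≤ gCa) (hgK : 0 ≤ gK) (hgL : 0 < gL)
    (hV2 : 0 < V2) (hV4 : 0 < V4) :
    ∀ I : ℝ, ∃ Vs Ns : ℝ,
      Ns = (1/2) * (1 + Real.tanh ((Vs - V3) / V4)) ∧
      gCa * ((1/2) * (1 + Real.tanh ((Vs - V1) / V2))) * (Vs - VCa)
        + gK * Ns * (Vs - VK) + gL * (Vs - VL) = I := by
  intro I
  set f : ℝ → ℝ := fun V =>
    gCa * ((1/2) * (1 + Real.tanh ((V - V1) / V2))) * (V - VCa)
      + gK * ((1/2) * (1 + Real.tanh ((V - V3) / V4))) * (V - VK) + gL * (V - VL)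
    with hf
  have hcont : Continuous f := by
    apply Continuous.add
    apply Continuous.add
    · exact (continuous_const.mul (continuous_const.mul (continuous_const.add
        (tanh_cont.comp ((continuous_id.sub continuous_const).div_const V2))))).mul
        (continuous_id.sub continuous_const)
    · exact (continuous_const.mul (continuous_const.mul (continuous_const.add
        (tanh_cont.comp ((continuous_id.sub continuous_const).div_const V4))))).mul
        (continuous_id.sub continuous_const)
    · exact continuous_const.mul (continuous_id.sub continuous_const)
  have hM : ∀ x : ℝ, 0 ≤ (1/2 : ℝ) * (1 + Real.tanh x) ∧ (1/2 : ℝ) * (1 + Real.tanh x) ≤ 1 := by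
    intro x
    have := tanh_bounds x
    obtain ⟨h1, h2⟩ := this
    constructor <;> nlinarith
  set a : ℝ := min (min VCa VK) (VL + I / gL) with ha
  set b : ℝ := max (max VCa VK) (VL + I / gL) with hb
  have hab : a ≤ b := le_trans (min_le_right _ _) (le_max_right _ _)
  have hfa : f a ≤ I := by
    have h1 := (hM ((a - V1) / V2))
    have h2 := (hM ((a - V3) / V4))
    have haC : a ≤ VCa := le_trans (min_le_left _ _) (min_le_left _ _)
    have haK : a ≤ VK := le_trans (min_le_left _ _) (min_le_right _ _)
    have haL : a ≤ VL + I / gL := min_le_right _ _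
    have hL : gL * (a - VL) ≤ I := by
      have : gL * (a - VL) ≤ gL * (I / gL) := by
        apply mul_le_mul_of_nonneg_left (by linarith) hgL.le
      rwa [mul_div_cancel₀ _ hgL.ne'] at this
    have t1 : gCa * ((1/2) * (1 + Real.tanh ((a - V1) / V2))) * (a - VCa) ≤ 0 :=
      mul_nonpos_of_nonneg_of_nonpos (mul_nonneg hgCa h1.1) (by linarith)
    have t2 : gK * ((1/2) * (1 + Real.tanh ((a - V3) / V4))) * (a - VK) ≤ 0 :=
      mul_nonpos_of_nonneg_of_nonpos (mul_nonneg hgK h2.1) (by linarith)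
    simp only [hf]
    linarith
  have hfb : I ≤ f b := by
    have h1 := (hM ((b - V1) / V2))
    have h2 := (hM ((b - V3) / V4))
    have hbC : VCa ≤ b := le_trans (le_max_left _ _) (le_max_left _ _)
    have hbK : VK ≤ b := le_trans (le_max_right _ _) (le_max_left _ _)
    have hbL : VL + I / gL ≤ b := le_max_right _ _
    have hL : I ≤ gL * (b - VL) := by
      have : gL * (I / gL) ≤ gL * (b - VL) := by
        apply mul_le_mul_of_nonneg_left (by linarith) hgL.le
      rwa [mul_div_cancel₀ _ hgL.ne'] at this
    have t1 : 0 ≤ gCa * ((1/2) * (1 + Real.tanh ((b - V1) / V2))) * (b - VCa) :=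
      mul_nonneg (mul_nonneg hgCa h1.1) (by linarith)
    have t2 : 0 ≤ gK * ((1/2) * (1 + Real.tanh ((b - V3) / V4))) * (b - VK) :=
      mul_nonneg (mul_nonneg hgK h2.1) (by linarith)
    simp only [hf]
    linarith
  have : I ∈ Set.Icc (f a) (f b) := ⟨hfa, hfb⟩
  obtain ⟨Vs, _, hVs⟩ := intermediate_value_Icc hab (hcont.continuousOn) this
  exact ⟨Vs, _, rfl, hVs⟩
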